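/- arXiv:2206.04932 — 2 statements merged into one kernel-verified Lean document; each statement's English description precedes it below -/
import Mathlib

section
/- Let μ be a probability measure on ℝ. Suppose there exist a ≥ 0, b ∈ ℝ and a measurable function k : ℝ → [0,∞) that is nondecreasing on (−∞,0), nonincreasing on (0,∞), not Lebesgue-almost-everywhere zero, satisfies ∫_ℝ min(1,t²)·k(t)/|t| dt < ∞, and such that F_μ(z) = z − b − a/z + ∫_ℝ (1/(t−z) − t/(1+t²))·|t|·k(t) dt for all z ∈ ℂ⁺. Then μ({0}) = 0. -/
open MeasureTheory Complex Set

/-- The Cauchy transform of a measure on ℝ. -/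
noncomputable def cauchyTransform (μ : Measure ℝ) (z : ℂ) : ℂ :=
  ∫ x, (z - (x : ℂ))⁻¹ ∂μ

/-- The F-transform (reciprocal Cauchy transform) of a measure on ℝ. -/
noncomputable def Ftransform (μ : Measure ℝ) (z : ℂ) : ℂ :=
  (cauchyTransform μ z)⁻¹

/-!
On the imaginary axis, `-Im G(iy) = ∫ y / (x² + y²) dμ(x) ≥ μ{0} / y` and
`‖G‖ = 1 / ‖F‖ ≤ 1 / Im F`, so `μ{0} ≤ y / Im F(iy)`. The representation of `F` gives
`Im F(iy) ≥ ∫ y |t| k(t) / (t² + y²) dt`, and unimodality makes `k(t) + k(-t) ≥ ε` on some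
`(0, c]`, which bounds this integral below by `y ε log(c / y) / 4`. Hence
`μ{0} ≤ 4 / (ε log(c / y))`, which tends to `0` as `y → 0`.
-/

lemma im_le_norm_sub_ofReal (z : ℂ) (x : ℝ) : z.im ≤ ‖z - x‖ := by
  simpa using (le_abs_self _).trans (Complex.abs_im_le_norm (z - x))

section Atoms

variable (μ : Measure ℝ) [IsFiniteMeasure μ] {z : ℂ}

lemma integrable_inv_sub_ofReal (hz : 0 < z.im) : Integrable (fun x : ℝ => (z - x)⁻¹) μ := by
  refine (integrable_const z.im⁻¹).mono' (by fun_prop) (.of_forall fun x => ?_)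
  rw [norm_inv]
  exact inv_anti₀ hz (im_le_norm_sub_ofReal z x)

lemma neg_im_cauchyTransform (hz : 0 < z.im) :
    -(cauchyTransform μ z).im = ∫ x, z.im / normSq (z - x) ∂μ := by
  have h := integral_im (integrable_inv_sub_ofReal μ hz)
  simp only [RCLike.im_to_complex] at h
  rw [cauchyTransform, ← h, ← integral_neg]
  congr 1 with x
  simp [neg_div]

lemma measureReal_singleton_re_div_im_le_neg_im_cauchyTransform (hz : 0 < z.im) :
    μ.real {z.re} / z.im ≤ -(cauchyTransform μ z).im := by
  have hint : Integrable (fun x : ℝ => z.im / normSq (z - x)) μ :=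
    (integrable_inv_sub_ofReal μ hz).im.neg.congr (.of_forall fun x => by simp [neg_div])
  have hatom : z.im / normSq (z - (z.re : ℂ)) = z.im⁻¹ := by
    have hre : z - (z.re : ℂ) = z.im * I := by apply Complex.ext <;> simp
    rw [hre, normSq_mul, normSq_I, normSq_ofReal]
    field_simp
  calc μ.real {z.re} / z.im = ∫ x in {z.re}, z.im / normSq (z - x) ∂μ := by
        rw [integral_singleton, hatom, smul_eq_mul, div_eq_mul_inv]
    _ ≤ ∫ x, z.im / normSq (z - x) ∂μ :=
        setIntegral_le_integral hint (.of_forall fun x => div_nonneg hz.le (normSq_nonneg _))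
    _ = -(cauchyTransform μ z).im := (neg_im_cauchyTransform μ hz).symm

lemma measureReal_singleton_re_le_im_div_im_Ftransform (hz : 0 < z.im)
    (hF : 0 < (Ftransform μ z).im) : μ.real {z.re} ≤ z.im / (Ftransform μ z).im := by
  have hle : μ.real {z.re} / z.im ≤ ((Ftransform μ z).im)⁻¹ :=
    calc μ.real {z.re} / z.im ≤ -(cauchyTransform μ z).im :=
          measureReal_singleton_re_div_im_le_neg_im_cauchyTransform μ hz
      _ ≤ ‖cauchyTransform μ z‖ := (neg_le_abs _).trans (Complex.abs_im_le_norm _)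
      _ = ‖Ftransform μ z‖⁻¹ := by rw [Ftransform, norm_inv, inv_inv]
      _ ≤ ((Ftransform μ z).im)⁻¹ :=
          inv_anti₀ hF ((le_abs_self _).trans (Complex.abs_im_le_norm _))
  rwa [div_le_iff₀ hz, ← div_eq_inv_mul] at hle

end Atoms

section NevanlinnaKernel

noncomputable def nevanlinnaKernel (z : ℂ) (t : ℝ) : ℂ :=
  ((t : ℂ) - z)⁻¹ - (t : ℂ) / (1 + (t : ℂ) ^ 2)

variable {z : ℂ}

lemma nevanlinnaKernel_eq (hz : 0 < z.im) (t : ℝ) :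
    nevanlinnaKernel z t = ((1 + z ^ 2) / ((t : ℂ) - z) + z) / (1 + (t : ℂ) ^ 2) := by
  have ht : (t : ℂ) - z ≠ 0 := fun h => by simpa [hz.ne'] using congrArg Complex.im h
  have ht' : 1 + (t : ℂ) ^ 2 ≠ 0 := by exact_mod_cast (by positivity : (1 + t ^ 2 : ℝ) ≠ 0)
  rw [nevanlinnaKernel]
  field_simp
  ring

lemma norm_nevanlinnaKernel_le (hz : 0 < z.im) (t : ℝ) :
    ‖nevanlinnaKernel z t‖ ≤ (‖1 + z ^ 2‖ / z.im + ‖z‖) / (1 + t ^ 2) := by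
  have hden : ‖1 + (t : ℂ) ^ 2‖ = 1 + t ^ 2 := by
    exact_mod_cast Complex.norm_of_nonneg (by positivity : (0 : ℝ) ≤ 1 + t ^ 2)
  rw [nevanlinnaKernel_eq hz, norm_div, hden]
  gcongr
  calc ‖(1 + z ^ 2) / ((t : ℂ) - z) + z‖ ≤ ‖1 + z ^ 2‖ / ‖(t : ℂ) - z‖ + ‖z‖ := by
        rw [← norm_div]; exact norm_add_le _ _
    _ ≤ ‖1 + z ^ 2‖ / z.im + ‖z‖ := by
        gcongr
        rw [norm_sub_rev]
        exact im_le_norm_sub_ofReal z t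

lemma nevanlinnaKernel_im (z : ℂ) (t : ℝ) :
    (nevanlinnaKernel z t).im = z.im / normSq ((t : ℂ) - z) := by
  have : (t : ℂ) / (1 + (t : ℂ) ^ 2) = ((t / (1 + t ^ 2) : ℝ) : ℂ) := by push_cast; rfl
  rw [nevanlinnaKernel, sub_im, this, ofReal_im, inv_im]
  simp

lemma nevanlinnaKernel_ofReal_mul_I_im (y t : ℝ) :
    (nevanlinnaKernel (y * I) t).im = y / (t ^ 2 + y ^ 2) := by
  rw [nevanlinnaKernel_im, normSq_apply]
  simp
  ring_nf

lemma abs_div_one_add_sq_le (t : ℝ) : |t| / (1 + t ^ 2) ≤ min 1 (t ^ 2) / |t| := by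
  rcases eq_or_ne t 0 with rfl | ht
  · simp
  have ht' : 0 < |t| := abs_pos.2 ht
  rw [div_le_div_iff₀ (by positivity) ht', ← sq, sq_abs]
  rcases le_total (t ^ 2) 1 with h | h
  · rw [min_eq_right h]; nlinarith [sq_nonneg t]
  · rw [min_eq_left h]; linarith

lemma integrable_nevanlinnaKernel_mul (hz : 0 < z.im) {k : ℝ → ℝ} (hk_meas : Measurable k)
    (hk_int : Integrable (fun t : ℝ => min 1 (t ^ 2) * k t / |t|)) :
    Integrable (fun t : ℝ => nevanlinnaKernel z t * ((|t| * k t : ℝ) : ℂ)) := by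
  set C := ‖1 + z ^ 2‖ / z.im + ‖z‖
  have hC : 0 ≤ C := by positivity
  refine (hk_int.norm.const_mul C).mono' (by unfold nevanlinnaKernel; fun_prop)
    (.of_forall fun t => ?_)
  calc ‖nevanlinnaKernel z t * ((|t| * k t : ℝ) : ℂ)‖
      ≤ C / (1 + t ^ 2) * (|t| * |k t|) := by
        rw [norm_mul, Complex.norm_real, Real.norm_eq_abs, abs_mul, abs_abs]
        gcongr
        exact norm_nevanlinnaKernel_le hz t
    _ = C * (|t| / (1 + t ^ 2) * |k t|) := by ring
    _ ≤ C * (min 1 (t ^ 2) / |t| * |k t|) := by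
        gcongr ?_ * (?_ * _)
        exact abs_div_one_add_sq_le t
    _ = C * ‖min 1 (t ^ 2) * k t / |t|‖ := by
        rw [Real.norm_eq_abs, abs_div, abs_mul, abs_abs,
          abs_of_nonneg (le_min zero_le_one (sq_nonneg t))]
        ring

lemma integral_nevanlinnaKernel_im_mul_le_im (hz : 0 < z.im) {a : ℝ} (ha : 0 ≤ a) (b : ℝ)
    {r : ℝ → ℝ} (hint : Integrable (fun t : ℝ => nevanlinnaKernel z t * (r t : ℂ))) :
    ∫ t, (nevanlinnaKernel z t).im * r t ≤
      (z - b - a / z + ∫ t, nevanlinnaKernel z t * (r t : ℂ)).im := by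
  have h := integral_im hint
  simp only [RCLike.im_to_complex, im_mul_ofReal] at h
  rw [add_im, ← h, sub_im, sub_im, ofReal_im, div_im, ofReal_re, ofReal_im]
  refine le_add_of_nonneg_left ?_
  simp only [zero_mul, zero_div, sub_zero, zero_sub, sub_neg_eq_add]
  exact add_nonneg hz.le (div_nonneg (mul_nonneg ha hz.le) (normSq_nonneg z))

end NevanlinnaKernel

section PoissonLowerBound

variable {ε c y : ℝ}

lemma mul_log_le_integral_poisson {κ : ℝ → ℝ} (hκ : ∀ t, 0 ≤ κ t) (hε : 0 ≤ ε) (hy : 0 < y)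
    (hyc : y < c) (hκε : ∀ t ∈ Ioc 0 c, ε ≤ κ t)
    (hint : Integrable (fun t => y / (t ^ 2 + y ^ 2) * (|t| * κ t))) :
    y * ε / 2 * (Real.log c - Real.log y) ≤ ∫ t, y / (t ^ 2 + y ^ 2) * (|t| * κ t) := by
  have hc : 0 < c := hy.trans hyc
  have hI : IntegrableOn (fun t : ℝ => y * ε / 2 * t⁻¹) (Ioc y c) := by
    refine (ContinuousOn.integrableOn_Icc ?_).mono_set Ioc_subset_Icc_self
    exact continuousOn_const.mul (continuousOn_inv₀.mono fun t ht => (hy.trans_le ht.1).ne')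
  calc y * ε / 2 * (Real.log c - Real.log y) = ∫ t in Ioc y c, y * ε / 2 * t⁻¹ := by
        rw [← intervalIntegral.integral_of_le hyc.le, intervalIntegral.integral_const_mul,
          integral_inv_of_pos hy hc, Real.log_div hc.ne' hy.ne']
    _ ≤ ∫ t in Ioc y c, y / (t ^ 2 + y ^ 2) * (|t| * κ t) := by
        refine setIntegral_mono_on hI hint.integrableOn measurableSet_Ioc fun t ht => ?_
        have ht0 : 0 < t := hy.trans ht.1
        have hden : t ^ 2 + y ^ 2 ≤ 2 * t ^ 2 := by nlinarith [ht.1]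
        calc y * ε / 2 * t⁻¹ = y / (2 * t ^ 2) * (t * ε) := by field_simp
          _ ≤ y / (t ^ 2 + y ^ 2) * (|t| * κ t) := by
            rw [abs_of_pos ht0]
            gcongr
            exact hκε t ⟨ht0, ht.2⟩
    _ ≤ ∫ t, y / (t ^ 2 + y ^ 2) * (|t| * κ t) :=
        setIntegral_le_integral hint (.of_forall fun t => by have := hκ t; positivity)

lemma mul_log_le_integral_poisson_of_add_neg {k : ℝ → ℝ} (hk : ∀ t, 0 ≤ k t) (hε : 0 ≤ ε)
    (hy : 0 < y) (hyc : y < c) (hkε : ∀ t ∈ Ioc 0 c, ε ≤ k t + k (-t))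
    (hint : Integrable (fun t => y / (t ^ 2 + y ^ 2) * (|t| * k t))) :
    y * ε / 4 * (Real.log c - Real.log y) ≤ ∫ t, y / (t ^ 2 + y ^ 2) * (|t| * k t) := by
  set g : ℝ → ℝ := fun t => y / (t ^ 2 + y ^ 2) * (|t| * k t)
  have hsymm : (fun t => y / (t ^ 2 + y ^ 2) * (|t| * (k t + k (-t)))) = fun t => g t + g (-t) := by
    ext t
    simp only [g, neg_sq, abs_neg]
    ring
  have hlog := mul_log_le_integral_poisson (fun t => add_nonneg (hk t) (hk (-t))) hε hy hyc hkε
    (by rw [hsymm]; exact hint.add hint.comp_neg)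
  rw [hsymm, integral_add hint hint.comp_neg, integral_neg_eq_self g] at hlog
  linarith

lemma mul_log_le_im_pick {a : ℝ} (ha : 0 ≤ a) (b : ℝ) {k : ℝ → ℝ} (hk_meas : Measurable k)
    (hk_nonneg : ∀ t, 0 ≤ k t) (hk_int : Integrable (fun t : ℝ => min 1 (t ^ 2) * k t / |t|))
    (hε : 0 ≤ ε) (hkε : ∀ t ∈ Ioc 0 c, ε ≤ k t + k (-t)) (hy : 0 < y) (hyc : y < c) :
    y * ε / 4 * (Real.log c - Real.log y) ≤
      (y * I - b - a / (y * I) +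
        ∫ t : ℝ, nevanlinnaKernel (y * I) t * ((|t| * k t : ℝ) : ℂ)).im := by
  have hz : 0 < (y * I : ℂ).im := by simpa using hy
  have hint := integrable_nevanlinnaKernel_mul hz hk_meas hk_int
  have hpoisson : Integrable (fun t => y / (t ^ 2 + y ^ 2) * (|t| * k t)) := by
    simpa [nevanlinnaKernel_ofReal_mul_I_im] using hint.im
  calc y * ε / 4 * (Real.log c - Real.log y) ≤ ∫ t, y / (t ^ 2 + y ^ 2) * (|t| * k t) :=
        mul_log_le_integral_poisson_of_add_neg hk_nonneg hε hy hyc hkε hpoisson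
    _ = ∫ t, (nevanlinnaKernel (y * I) t).im * (|t| * k t) := by
        simp only [nevanlinnaKernel_ofReal_mul_I_im]
    _ ≤ _ := integral_nevanlinnaKernel_im_mul_le_im hz ha b hint

end PoissonLowerBound

lemma exists_pos_le_add_neg_of_unimodal {k : ℝ → ℝ} (hk_nonneg : ∀ t, 0 ≤ k t)
    (hk_mono : MonotoneOn k (Iio 0)) (hk_anti : AntitoneOn k (Ioi 0))
    (hk_ne : ¬ (∀ᵐ t ∂(volume : Measure ℝ), k t = 0)) :
    ∃ ε > (0 : ℝ), ∃ c > (0 : ℝ), ∀ t ∈ Ioc 0 c, ε ≤ k t + k (-t) := by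
  have hsupp : volume ({t : ℝ | k t ≠ 0} \ {0}) ≠ 0 := by
    rw [measure_sdiff_null (measure_singleton 0)]
    exact fun h => hk_ne (ae_iff.mpr h)
  obtain ⟨t₀, hkt₀, ht₀⟩ := nonempty_of_measure_ne_zero hsupp
  refine ⟨k t₀, (hk_nonneg t₀).lt_of_ne' hkt₀, |t₀|, abs_pos.2 ht₀, fun t ht => ?_⟩
  rcases lt_or_gt_of_ne ht₀ with h | h
  · have : k t₀ ≤ k (-t) := hk_mono h (neg_neg_iff_pos.2 ht.1) (by linarith [abs_of_neg h ▸ ht.2])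
    linarith [hk_nonneg t]
  · have : k t₀ ≤ k t := hk_anti ht.1 h (abs_of_pos h ▸ ht.2)
    linarith [hk_nonneg (-t)]

lemma tendsto_div_mul_log_sub_log_nhdsGT_zero (C : ℝ) {ε : ℝ} (hε : 0 < ε) (c : ℝ) :
    Filter.Tendsto (fun y => C / (ε * (Real.log c - Real.log y))) (nhdsWithin 0 (Ioi 0))
      (nhds 0) := by
  have hlog : Filter.Tendsto (fun y => Real.log c - Real.log y) (nhdsWithin 0 (Ioi 0))
      Filter.atTop :=
    Filter.tendsto_atTop_add_const_left _ _
      (Filter.tendsto_neg_atBot_atTop.comp Real.tendsto_log_nhdsGT_zero)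
  exact tendsto_const_nhds.div_atTop (hlog.const_mul_atTop hε)

/-- a Boolean selfdecomposable probability measure `μ` (given by its
Pick–Nevanlinna representation with data `a, b, k`, where `k` is unimodal with mode 0
and not a.e. zero) has no atom at `0`. -/
theorem boolean_sd_no_atom_at_zero (μ : Measure ℝ) [IsProbabilityMeasure μ]
    (a b : ℝ) (ha : 0 ≤ a) (k : ℝ → ℝ) (hk_meas : Measurable k)
    (hk_nonneg : ∀ t, 0 ≤ k t)
    (hk_mono : MonotoneOn k (Set.Iio 0)) (hk_anti : AntitoneOn k (Set.Ioi 0))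
    (hk_ne : ¬ (∀ᵐ t ∂(volume : Measure ℝ), k t = 0))
    (hk_int : Integrable (fun t : ℝ => min 1 (t ^ 2) * k t / |t|))
    (hF : ∀ z : ℂ, 0 < z.im →
      Ftransform μ z = z - (b : ℂ) - (a : ℂ) / z +
        ∫ t : ℝ, (((t : ℂ) - z)⁻¹ - (t : ℂ) / (1 + (t : ℂ) ^ 2)) * ((|t| * k t : ℝ) : ℂ)) :
    μ {(0 : ℝ)} = 0 := by
  obtain ⟨ε, hε, c, hc, hkε⟩ := exists_pos_le_add_neg_of_unimodal hk_nonneg hk_mono hk_anti hk_ne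
  have hbound : ∀ y ∈ Ioo 0 c, μ.real {0} ≤ 4 / (ε * (Real.log c - Real.log y)) := by
    rintro y ⟨hy, hyc⟩
    have hz : 0 < (y * I : ℂ).im := by simpa using hy
    have hImF : y * ε / 4 * (Real.log c - Real.log y) ≤ (Ftransform μ (y * I)).im := by
      rw [hF _ hz]
      exact mul_log_le_im_pick ha b hk_meas hk_nonneg hk_int hε.le hkε hy hyc
    have hL : 0 < y * ε / 4 * (Real.log c - Real.log y) := by
      have := sub_pos.2 (Real.log_lt_log hy hyc)
      positivity
    have hatom := measureReal_singleton_re_le_im_div_im_Ftransform μ hz (hL.trans_le hImF)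
    simp only [mul_re, ofReal_re, I_re, mul_zero, ofReal_im, I_im, mul_one, sub_zero,
      mul_im, add_zero] at hatom
    calc μ.real {0} ≤ y / (Ftransform μ (y * I)).im := hatom
      _ ≤ y / (y * ε / 4 * (Real.log c - Real.log y)) := div_le_div_of_nonneg_left hy.le hL hImF
      _ = 4 / (ε * (Real.log c - Real.log y)) := by field_simp
  have hzero : μ.real {0} ≤ 0 := ge_of_tendsto (tendsto_div_mul_log_sub_log_nhdsGT_zero 4 hε c)
    (Filter.eventually_of_mem (Ioo_mem_nhdsGT hc) hbound)
  exact (measureReal_eq_zero_iff).1 (le_antisymm hzero measureReal_nonneg)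
end

section
/- The function f : (0,∞) → ℝ defined by f(x) = e^{−x²/2}·(1 + (4/π)·h(x/√2)²), where h(u) = ∫₀^u e^{t²} dt, is monotone nondecreasing on (0,∞). Equivalently, the function ℓ(x) = c/f(x) (for any constant c > 0) is nonincreasing on (0,∞). -/
/-!
Substituting `x = √2 u` turns `f` into `F(u) = e^{-u²} (1 + c h(u)²)` with `c = 4/π ≥ 1`,
and `F' = 2 e^{-u²} W` with `W = c h e^{u²} - u (1 + c h²)`. Now `W(0) = 0` and
`W' = c (e^{2u²} - h²) - 1`, while `e^{2u²} - h²` equals `1` at `0` and has derivative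
`2 e^{u²} (2u e^{u²} - h) ≥ 0` because `h(u) ≤ u e^{u²}`. Hence `W' ≥ c - 1 ≥ 0`, so `W ≥ 0`.
-/

open Real Set

noncomputable def integralExpSq (u : ℝ) : ℝ := ∫ t in (0 : ℝ)..u, exp (t ^ 2)

lemma continuous_exp_sq : Continuous fun t : ℝ => exp (t ^ 2) := by fun_prop

@[simp]
lemma integralExpSq_zero : integralExpSq 0 = 0 := intervalIntegral.integral_same

lemma hasDerivAt_integralExpSq (u : ℝ) : HasDerivAt integralExpSq (exp (u ^ 2)) u :=
  continuous_exp_sq.integral_hasStrictDerivAt 0 u |>.hasDerivAt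

lemma hasDerivAt_exp_sq (u : ℝ) :
    HasDerivAt (fun u : ℝ => exp (u ^ 2)) (2 * u * exp (u ^ 2)) u := by
  convert (hasDerivAt_pow 2 u).exp using 1
  ring

lemma integralExpSq_le {u : ℝ} (hu : 0 ≤ u) : integralExpSq u ≤ u * exp (u ^ 2) := by
  have h : integralExpSq u ≤ ∫ _ in (0 : ℝ)..u, exp (u ^ 2) :=
    intervalIntegral.integral_mono_on hu (continuous_exp_sq.intervalIntegrable 0 u)
      intervalIntegrable_const fun t ht => exp_le_exp.2 (pow_le_pow_left₀ ht.1 ht.2 2)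
  simpa [mul_comm] using h

lemma monotoneOn_Ici_of_hasDerivAt_nonneg {f f' : ℝ → ℝ} {a : ℝ}
    (hf : ∀ x, HasDerivAt f (f' x) x) (hf' : ∀ x, a < x → 0 ≤ f' x) :
    MonotoneOn f (Ici a) :=
  monotoneOn_of_hasDerivWithinAt_nonneg (convex_Ici a)
    (fun x _ => (hf x).continuousAt.continuousWithinAt)
    (fun x _ => (hf x).hasDerivWithinAt) (by simpa using hf')

lemma one_le_exp_sq_sq_sub_integralExpSq_sq {u : ℝ} (hu : 0 ≤ u) :
    1 ≤ exp (u ^ 2) ^ 2 - integralExpSq u ^ 2 := by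
  have hmono : MonotoneOn (fun u => exp (u ^ 2) ^ 2 - integralExpSq u ^ 2) (Ici 0) := by
    refine monotoneOn_Ici_of_hasDerivAt_nonneg
      (fun u => ((hasDerivAt_exp_sq u).pow 2).sub ((hasDerivAt_integralExpSq u).pow 2))
      fun x hx => ?_
    calc (0 : ℝ) ≤ 2 * exp (x ^ 2) * (2 * x * exp (x ^ 2) - integralExpSq x) :=
          mul_nonneg (by positivity) (by nlinarith [integralExpSq_le hx.le, exp_pos (x ^ 2)])
      _ = _ := by norm_num; ring
  simpa using hmono self_mem_Ici hu hu

lemma mul_one_add_mul_integralExpSq_sq_le {c u : ℝ} (hc : 1 ≤ c) (hu : 0 ≤ u) :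
    u * (1 + c * integralExpSq u ^ 2) ≤ c * integralExpSq u * exp (u ^ 2) := by
  have hmono : MonotoneOn
      (fun u => c * integralExpSq u * exp (u ^ 2) - u * (1 + c * integralExpSq u ^ 2)) (Ici 0) := by
    refine monotoneOn_Ici_of_hasDerivAt_nonneg (fun u =>
      (((hasDerivAt_integralExpSq u).const_mul c).mul (hasDerivAt_exp_sq u)).sub
        ((hasDerivAt_id u).mul ((((hasDerivAt_integralExpSq u).pow 2).const_mul c).const_add 1)))
      fun x hx => ?_
    calc (0 : ℝ) ≤ c * (exp (x ^ 2) ^ 2 - integralExpSq x ^ 2) - 1 := by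
          nlinarith [one_le_exp_sq_sq_sub_integralExpSq_sq hx.le]
      _ = _ := by norm_num; ring
  simpa using hmono self_mem_Ici hu hu

lemma monotoneOn_exp_neg_sq_mul_one_add_mul_integralExpSq_sq {c : ℝ} (hc : 1 ≤ c) :
    MonotoneOn (fun u => exp (-u ^ 2) * (1 + c * integralExpSq u ^ 2)) (Ici 0) := by
  refine monotoneOn_Ici_of_hasDerivAt_nonneg (fun u =>
    (hasDerivAt_pow 2 u).neg.exp.mul
      ((((hasDerivAt_integralExpSq u).pow 2).const_mul c).const_add 1))
    fun x hx => ?_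
  calc (0 : ℝ) ≤ 2 * exp (-x ^ 2) *
        (c * integralExpSq x * exp (x ^ 2) - x * (1 + c * integralExpSq x ^ 2)) :=
        mul_nonneg (by positivity) (sub_nonneg.2 (mul_one_add_mul_integralExpSq_sq_le hc hx.le))
    _ = _ := by norm_num; ring

/-- the function `f(x) = e^{-x²/2} (1 + (4/π) h(x/√2)²)` with
`h(u) = ∫₀^u e^{t²} dt` is monotone nondecreasing on `(0, ∞)`. -/
theorem gaussian_boolean_f_monotone :
    MonotoneOn
      (fun x : ℝ => Real.exp (-(x ^ 2) / 2) *
        (1 + (4 / Real.pi) * (∫ t in (0 : ℝ)..(x / Real.sqrt 2), Real.exp (t ^ 2)) ^ 2))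
      (Set.Ioi 0) := by
  have hc : 1 ≤ 4 / π := by rw [le_div_iff₀ pi_pos]; linarith [pi_le_four]
  have hscale : MonotoneOn (fun x : ℝ => x / √2) (Ioi 0) :=
    fun a _ b _ hab => div_le_div_of_nonneg_right hab (sqrt_nonneg 2)
  have hmaps : MapsTo (fun x : ℝ => x / √2) (Ioi 0) (Ici 0) :=
    fun x hx => div_nonneg (le_of_lt hx) (sqrt_nonneg 2)
  convert (monotoneOn_exp_neg_sq_mul_one_add_mul_integralExpSq_sq hc).comp hscale hmaps using 1
  ext x
  simp only [Function.comp_apply, integralExpSq, div_pow, sq_sqrt zero_le_two, neg_div]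
end
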